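/- arXiv:2508.14291 — 4 statements merged into one kernel-verified Lean document; each statement's English description precedes it below -/
import Mathlib

section
/- Let F : W ⇄ V : G be an adjunction between monoidal categories where G is lax monoidal and the counit ε : F(𝟙_W) ⟶ 𝟙_V of the corresponding oplax monoidal structure on F is an isomorphism. Then for every V-enriched category C, the underlying category of the W-enriched category G_*C is isomorphic to the underlying category of C via an identity-on-objects isomorphism of categories: for all objects x, y, the bijection Hom_W(𝟙_W, G(C(x,y))) ≅ Hom_V(F(𝟙_W), C(x,y)) ≅ Hom_V(𝟙_V, C(x,y)) (the adjunction bijection followed by precomposition with ε⁻¹) sends enriched identities to enriched identities and is compatible with the compositions of the two underlying categories. -/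
/-!
The left adjoint `F` inherits from `G` an oplax monoidal structure
(`Adjunction.leftAdjointOplaxMonoidal`) whose unit `η F` is the transpose of `ε G`, and
transposing along `F ⊣ G` turns the structure maps of `G` into those of `F`. Once `η F` is
invertible, `g ↦ (η F)⁻¹ ≫ g♭` (with `g♭` the transpose of `g`) therefore identifies global elements of `G a` with global
elements of `a`, compatibly with the unit `ε G`, with tensor products along `μ G`, and with
postcomposition. The enriched identities and compositions of `G_*C` are built from exactly
these operations.
-/

namespace CategoryTheory

open Category MonoidalCategory Functor.OplaxMonoidal Functor.LaxMonoidal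

variable {C D : Type*} [Category C] [Category D] [MonoidalCategory C] [MonoidalCategory D]

namespace Functor.OplaxMonoidal

lemma inv_η_comp_map_leftUnitor_inv_comp_δ (F : C ⥤ D) [F.OplaxMonoidal] [IsIso (η F)] :
    CategoryTheory.inv (η F) ≫ F.map (λ_ (𝟙_ C)).inv ≫ δ F _ _ =
      (λ_ (𝟙_ D)).inv ≫ (CategoryTheory.inv (η F) ⊗ₘ CategoryTheory.inv (η F)) := by
  have h : F.map (λ_ (𝟙_ C)).inv ≫ δ F _ _ =
      (λ_ (F.obj (𝟙_ C))).inv ≫ CategoryTheory.inv (η F) ▷ _ := by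
    rw [left_unitality, assoc, assoc, ← comp_whiskerRight, IsIso.hom_inv_id, id_whiskerRight,
      comp_id]
  rw [h, leftUnitor_inv_naturality_assoc, tensorHom_def']

end Functor.OplaxMonoidal

namespace Adjunction

variable {F : C ⥤ D} {G : D ⥤ C} (adj : F ⊣ G) [F.OplaxMonoidal]

section

variable [G.LaxMonoidal] [adj.IsMonoidal]

lemma homEquiv_symm_ε_comp_map {a : D} (f : 𝟙_ D ⟶ a) :
    (adj.homEquiv _ _).symm (ε G ≫ G.map f) = η F ≫ f := by
  rw [homEquiv_naturality_right_symm, homEquiv_counit, map_ε_comp_counit_app_unit]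

lemma homEquiv_symm_tensorHom_comp_μ {X Y : C} {a b : D} (f : X ⟶ G.obj a) (g : Y ⟶ G.obj b) :
    (adj.homEquiv _ _).symm ((f ⊗ₘ g) ≫ μ G a b) =
      δ F X Y ≫ ((adj.homEquiv _ _).symm f ⊗ₘ (adj.homEquiv _ _).symm g) := by
  simp only [homEquiv_counit, F.map_comp, assoc, map_μ_comp_counit_app_tensor, ← δ_natural_assoc,
    tensorHom_comp_tensorHom]

end

variable [IsIso (η F)]

noncomputable def unitHomEquiv (a : D) : (𝟙_ C ⟶ G.obj a) ≃ (𝟙_ D ⟶ a) :=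
  (adj.homEquiv _ _).symm.trans (asIso (η F)).homFromEquiv

lemma unitHomEquiv_apply {a : D} (g : 𝟙_ C ⟶ G.obj a) :
    adj.unitHomEquiv a g = inv (η F) ≫ (adj.homEquiv _ _).symm g :=
  rfl

lemma unitHomEquiv_comp_map {a b : D} (g : 𝟙_ C ⟶ G.obj a) (h : a ⟶ b) :
    adj.unitHomEquiv b (g ≫ G.map h) = adj.unitHomEquiv a g ≫ h := by
  rw [unitHomEquiv_apply, unitHomEquiv_apply, homEquiv_naturality_right_symm, assoc]

variable [G.LaxMonoidal] [adj.IsMonoidal]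

lemma unitHomEquiv_ε_comp_map {a : D} (f : 𝟙_ D ⟶ a) :
    adj.unitHomEquiv a (ε G ≫ G.map f) = f := by
  rw [unitHomEquiv_apply, homEquiv_symm_ε_comp_map, IsIso.inv_hom_id_assoc]

lemma unitHomEquiv_leftUnitor_inv_comp_tensorHom_comp_μ {a b : D} (f : 𝟙_ C ⟶ G.obj a)
    (g : 𝟙_ C ⟶ G.obj b) :
    adj.unitHomEquiv (a ⊗ b) ((λ_ _).inv ≫ (f ⊗ₘ g) ≫ μ G a b) =
      (λ_ _).inv ≫ (adj.unitHomEquiv a f ⊗ₘ adj.unitHomEquiv b g) := by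
  simp only [unitHomEquiv_apply]
  rw [homEquiv_naturality_left_symm, homEquiv_symm_tensorHom_comp_μ,
    reassoc_of% inv_η_comp_map_leftUnitor_inv_comp_δ F, tensorHom_comp_tensorHom]

end Adjunction

end CategoryTheory

open CategoryTheory Category MonoidalCategory Functor

theorem underlying_of_transport_enrichment_iso
    {W V : Type*} [Category W] [Category V]
    [MonoidalCategory W] [MonoidalCategory V]
    (F : W ⥤ V) (G : V ⥤ W) [G.LaxMonoidal] (adj : F ⊣ G)
    (εinv : 𝟙_ V ⟶ F.obj (𝟙_ W))
    (hε₁ : (adj.homEquiv (𝟙_ W) (𝟙_ V)).symm (LaxMonoidal.ε G) ≫ εinv = 𝟙 (F.obj (𝟙_ W)))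
    (hε₂ : εinv ≫ (adj.homEquiv (𝟙_ W) (𝟙_ V)).symm (LaxMonoidal.ε G) = 𝟙 (𝟙_ V))
    {C : Type*} [EnrichedCategory V C] :
    -- the comparison maps on the hom-sets of the underlying categories are bijections
    (∀ x y : C, Function.Bijective
        (fun g : 𝟙_ W ⟶ G.obj (EnrichedCategory.Hom x y : V) =>
          εinv ≫ (adj.homEquiv (𝟙_ W) (EnrichedCategory.Hom x y)).symm g)) ∧
      -- they send the enriched identities of `G_*C` to the enriched identities of `C`
      (∀ x : C,
        εinv ≫ (adj.homEquiv (𝟙_ W) (EnrichedCategory.Hom x x)).symm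
            (LaxMonoidal.ε G ≫ G.map (eId V x)) = eId V x) ∧
      -- they are compatible with the compositions of the two underlying categories
      (∀ (x y z : C) (f : 𝟙_ W ⟶ G.obj (EnrichedCategory.Hom x y : V))
          (g : 𝟙_ W ⟶ G.obj (EnrichedCategory.Hom y z : V)),
        εinv ≫ (adj.homEquiv (𝟙_ W) (EnrichedCategory.Hom x z)).symm
            ((λ_ (𝟙_ W)).inv ≫ (f ⊗ₘ g) ≫
              LaxMonoidal.μ G (EnrichedCategory.Hom x y) (EnrichedCategory.Hom y z) ≫
              G.map (eComp V x y z)) =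
          (λ_ (𝟙_ V)).inv ≫
            ((εinv ≫ (adj.homEquiv (𝟙_ W) (EnrichedCategory.Hom x y)).symm f) ⊗ₘ
              (εinv ≫ (adj.homEquiv (𝟙_ W) (EnrichedCategory.Hom y z)).symm g)) ≫
            eComp V x y z) := by
  let := adj.leftAdjointOplaxMonoidal
  have : IsIso (OplaxMonoidal.η F) := ⟨εinv, hε₁, hε₂⟩
  obtain rfl : εinv = inv (OplaxMonoidal.η F) := (IsIso.inv_eq_of_hom_inv_id hε₁).symm
  refine ⟨fun x y => (adj.unitHomEquiv _).bijective, fun x => adj.unitHomEquiv_ε_comp_map _,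
    fun x y z f g => ?_⟩
  have h := adj.unitHomEquiv_comp_map ((λ_ _).inv ≫ (f ⊗ₘ g) ≫ LaxMonoidal.μ G _ _) (eComp V x y z)
  simp only [assoc, adj.unitHomEquiv_leftUnitor_inv_comp_tensorHom_comp_μ] at h
  exact h
end

section
/- Let V be a model category and C a model category enriched in V (an enriched ordinary category over V) such that for every cofibration i : a → b in C and every fibrant object z of C, the induced map i* : C(b,z) → C(a,z) is a fibration in V, which is a trivial fibration whenever i is a trivial cofibration. If f : a → b is a weak equivalence in C between cofibrant objects, then for every fibrant object z of C the induced map f* : C(b,z) → C(a,z) is a weak equivalence in V. -/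
/-!
STATEMENT 4: Let `V` be a model category and `C` a model category enriched in `V` (an
enriched ordinary category over `V`) such that for every cofibration `i : a → b` in `C` and
every fibrant object `z` of `C`, the induced map `i* : C(b,z) → C(a,z)` is a fibration in
`V`, which is a trivial fibration whenever `i` is a trivial cofibration. If `f : a → b` is
a weak equivalence in `C` between cofibrant objects, then for every fibrant object `z` of
`C` the induced map `f* : C(b,z) → C(a,z)` is a weak equivalence in `V`.
-/

open CategoryTheory Category Limits MonoidalCategory Functor

/-- `f` is a retract of `g` in the arrow category. -/
def IsRetractOfMaps {C : Type*} [Category C] {X Y X' Y' : C}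
    (f : X ⟶ Y) (g : X' ⟶ Y') : Prop :=
  ∃ (i : X ⟶ X') (r : X' ⟶ X) (i' : Y ⟶ Y') (r' : Y' ⟶ Y),
    i ≫ r = 𝟙 X ∧ i' ≫ r' = 𝟙 Y ∧ i ≫ g = f ≫ i' ∧ g ≫ r' = r ≫ f

/-- A model structure on a category: weak equivalences, fibrations and cofibrations,
satisfying the two-out-of-three, retract, lifting and factorization axioms. -/
structure ModelStruct (C : Type*) [Category C] where
  weq : MorphismProperty C
  fib : MorphismProperty C
  cof : MorphismProperty C
  weq_id : ∀ X : C, weq (𝟙 X)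
  weq_comp : ∀ {X Y Z : C} (f : X ⟶ Y) (g : Y ⟶ Z), weq f → weq g → weq (f ≫ g)
  weq_of_postcomp : ∀ {X Y Z : C} (f : X ⟶ Y) (g : Y ⟶ Z), weq g → weq (f ≫ g) → weq f
  weq_of_precomp : ∀ {X Y Z : C} (f : X ⟶ Y) (g : Y ⟶ Z), weq f → weq (f ≫ g) → weq g
  weq_retract : ∀ {X Y X' Y' : C} (f : X ⟶ Y) (g : X' ⟶ Y'),
    IsRetractOfMaps f g → weq g → weq f
  fib_retract : ∀ {X Y X' Y' : C} (f : X ⟶ Y) (g : X' ⟶ Y'),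
    IsRetractOfMaps f g → fib g → fib f
  cof_retract : ∀ {X Y X' Y' : C} (f : X ⟶ Y) (g : X' ⟶ Y'),
    IsRetractOfMaps f g → cof g → cof f
  lift : ∀ {A B X Y : C} (i : A ⟶ B) (p : X ⟶ Y), cof i → fib p →
    (weq i ∨ weq p) → HasLiftingProperty i p
  factor_cof_trivFib : ∀ {X Y : C} (f : X ⟶ Y), ∃ (Z : C) (g : X ⟶ Z) (h : Z ⟶ Y),
    cof g ∧ fib h ∧ weq h ∧ g ≫ h = f
  factor_trivCof_fib : ∀ {X Y : C} (f : X ⟶ Y), ∃ (Z : C) (g : X ⟶ Z) (h : Z ⟶ Y),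
    cof g ∧ weq g ∧ fib h ∧ g ≫ h = f

/-- An object is cofibrant if the map from the initial object is a cofibration. -/
def ModelStruct.Cofibrant {C : Type*} [Category C] [HasInitial C]
    (M : ModelStruct C) (x : C) : Prop :=
  M.cof (initial.to x)

/-- An object is fibrant if the map to the terminal object is a fibration. -/
def ModelStruct.Fibrant {C : Type*} [Category C] [HasTerminal C]
    (M : ModelStruct C) (x : C) : Prop :=
  M.fib (terminal.from x)

/-- Cofibrations in a model structure are closed under composition (via the retract
argument: factor the composite as a cofibration followed by a trivial fibration, lift
against the trivial fibration, and conclude that the composite is a retract of the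
cofibration factor). -/
lemma ModelStruct.cof_comp {C : Type*} [Category C] (M : ModelStruct C)
    {X Y Z : C} (g₁ : X ⟶ Y) (g₂ : Y ⟶ Z) (h₁ : M.cof g₁) (h₂ : M.cof g₂) :
    M.cof (g₁ ≫ g₂) := by
  obtain ⟨M', g, h, hg, hh, hwh, hfac⟩ := M.factor_cof_trivFib (g₁ ≫ g₂)
  haveI : HasLiftingProperty g₁ h := M.lift g₁ h h₁ hh (Or.inr hwh)
  haveI : HasLiftingProperty g₂ h := M.lift g₂ h h₂ hh (Or.inr hwh)
  haveI : HasLiftingProperty (g₁ ≫ g₂) h := HasLiftingProperty.of_comp_left g₁ g₂ h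
  have sq : CommSq g (g₁ ≫ g₂) h (𝟙 Z) := ⟨by rw [hfac, Category.comp_id]⟩
  refine M.cof_retract (g₁ ≫ g₂) g ⟨𝟙 X, 𝟙 X, sq.lift, h, by simp, sq.fac_right, ?_, ?_⟩ hg
  · rw [Category.id_comp, sq.fac_left]
  · rw [hfac, Category.id_comp]

theorem eHomWhiskerRight_weq_of_weq_between_cofibrant
    {V C : Type*} [Category V] [MonoidalCategory V] [Category C]
    [EnrichedOrdinaryCategory V C] [HasInitial C] [HasTerminal C]
    (MV : ModelStruct V) (MC : ModelStruct C)
    (h1 : ∀ {a b : C} (i : a ⟶ b) (z : C), MC.cof i → MC.Fibrant z →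
      MV.fib (eHomWhiskerRight V i z))
    (h2 : ∀ {a b : C} (i : a ⟶ b) (z : C), MC.cof i → MC.weq i → MC.Fibrant z →
      MV.fib (eHomWhiskerRight V i z) ∧ MV.weq (eHomWhiskerRight V i z))
    {a b : C} (f : a ⟶ b) (hf : MC.weq f)
    (ha : MC.Cofibrant a) (hb : MC.Cofibrant b)
    (z : C) (hz : MC.Fibrant z) :
    MV.weq (eHomWhiskerRight V f z) := by
  -- Step 1: factor `f = j ≫ q` with `j` a cofibration and `q` a trivial fibration.
  obtain ⟨Z, j, q, hj_cof, hq_fib, hq_weq, hfac⟩ := MC.factor_cof_trivFib f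
  -- `j` is a weak equivalence by two-out-of-three.
  have hj_weq : MC.weq j := MC.weq_of_postcomp j q hq_weq (hfac.symm ▸ hf)
  -- Step 2: a section `t` of `q`, by lifting (using that `b` is cofibrant).
  haveI : HasLiftingProperty (initial.to b) q := MC.lift _ _ hb hq_fib (Or.inr hq_weq)
  have sqt : CommSq (initial.to Z) (initial.to b) q (𝟙 b) := ⟨by apply initial.hom_ext⟩
  set t : b ⟶ Z := sqt.lift with ht_def
  have ht : t ≫ q = 𝟙 b := sqt.fac_right
  have ht_weq : MC.weq t :=
    MC.weq_of_postcomp t q hq_weq (ht.symm ▸ MC.weq_id b)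
  -- Step 3: factor `t = u ≫ v` with `u` a trivial cofibration, `v` a fibration.
  obtain ⟨Y, u, v, hu_cof, hu_weq, hv_fib, hfac2⟩ := MC.factor_trivCof_fib t
  -- `v` is a weak equivalence by two-out-of-three.
  have hv_weq : MC.weq v := MC.weq_of_precomp u v hu_weq (hfac2.symm ▸ ht_weq)
  -- Step 4: `Z` is cofibrant, so `v` admits a section `d`.
  have hZ_cof : MC.cof (initial.to Z) := by
    have : initial.to Z = initial.to a ≫ j := by apply initial.hom_ext
    rw [this]
    exact MC.cof_comp _ _ ha hj_cof
  haveI : HasLiftingProperty (initial.to Z) v := MC.lift _ _ hZ_cof hv_fib (Or.inr hv_weq)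
  have sqd : CommSq (initial.to Y) (initial.to Z) v (𝟙 Z) := ⟨by apply initial.hom_ext⟩
  set d : Z ⟶ Y := sqd.lift with hd_def
  have hd : d ≫ v = 𝟙 Z := sqd.fac_right
  -- h2 applied to the trivial cofibrations `u` and `j`.
  have hWu : MV.weq (eHomWhiskerRight V u z) := (h2 u z hu_cof hu_weq hz).2
  have hWj : MV.weq (eHomWhiskerRight V j z) := (h2 j z hj_cof hj_weq hz).2
  -- Step 5: `u ≫ (v ≫ q) = 𝟙 b`, hence `(v ≫ q)*` is a weak equivalence.
  have key1 : u ≫ (v ≫ q) = 𝟙 b := by rw [← Category.assoc, hfac2, ht]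
  have hcomp1 : eHomWhiskerRight V (v ≫ q) z ≫ eHomWhiskerRight V u z = 𝟙 _ := by
    rw [← eHomWhiskerRight_comp, key1, eHomWhiskerRight_id]
  have hWvq : MV.weq (eHomWhiskerRight V (v ≫ q) z) :=
    MV.weq_of_postcomp _ _ hWu (hcomp1.symm ▸ MV.weq_id _)
  -- Step 6: `q*` is a retract of `(v ≫ q)*` via `v*` and `d*` (using `d ≫ v = 𝟙`).
  have hret : IsRetractOfMaps (eHomWhiskerRight V q z) (eHomWhiskerRight V (v ≫ q) z) := by
    refine ⟨𝟙 _, 𝟙 _, eHomWhiskerRight V v z, eHomWhiskerRight V d z, by simp, ?_, ?_, ?_⟩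
    · rw [← eHomWhiskerRight_comp, hd, eHomWhiskerRight_id]
    · rw [Category.id_comp, ← eHomWhiskerRight_comp]
    · rw [Category.id_comp, ← eHomWhiskerRight_comp, ← Category.assoc, hd, Category.id_comp]
  have hWq : MV.weq (eHomWhiskerRight V q z) :=
    MV.weq_retract _ _ hret hWvq
  -- Step 7: conclude: `f* = q* ≫ j*` is a composition of weak equivalences.
  rw [← hfac, eHomWhiskerRight_comp]
  exact MV.weq_comp _ _ hWq hWj
end

section
/- Let V and W be closed symmetric monoidal model categories (satisfying the pushout-product and unit axioms) and let F : W ⇄ V : G be a weak monoidal Quillen adjunction. Then for every cofibrant object w of W and every fibrant object v of V, the canonical comparison map φ_{w,v} : G([F w, v]_V) → [w, G v]_W is a weak equivalence in W. -/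
/-!
STATEMENT 5: Let `V` and `W` be closed symmetric monoidal model categories (satisfying the
pushout-product and unit axioms) and let `F : W ⇄ V : G` be a weak monoidal Quillen
adjunction. Then for every cofibrant object `w` of `W` and every fibrant object `v` of `V`,
the canonical comparison map `φ_{w,v} : G([F w, v]_V) → [w, G v]_W` is a weak equivalence
in `W`.
-/

open CategoryTheory Category Limits MonoidalCategory Functor

/-- A Quillen adjunction: an adjunction whose left adjoint preserves cofibrations
and trivial cofibrations. -/
structure QuillenAdjunction {W V : Type*} [Category W] [Category V]
    (MW : ModelStruct W) (MV : ModelStruct V) (F : W ⥤ V) (G : V ⥤ W) where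
  adj : F ⊣ G
  F_cof : ∀ {a b : W} (i : a ⟶ b), MW.cof i → MV.cof (F.map i)
  F_trivCof : ∀ {a b : W} (i : a ⟶ b), MW.cof i → MW.weq i → MV.weq (F.map i)

/-- The pushout-product of `i : a ⟶ b` and `k : x ⟶ y` in a monoidal category. -/
noncomputable def pushoutProduct {C : Type*} [Category C] [MonoidalCategory C]
    [HasPushouts C] {a b x y : C} (i : a ⟶ b) (k : x ⟶ y) :
    pushout (a ◁ k) (i ▷ x) ⟶ b ⊗ y :=
  pushout.desc (i ▷ y) (b ◁ k) (whisker_exchange i k)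

/-- A monoidal model structure: a model structure together with the
pushout-product axiom and the unit axiom. -/
structure MonoidalModelStruct (C : Type*) [Category C] [MonoidalCategory C]
    [HasPushouts C] [HasInitial C] extends ModelStruct C where
  pp_cof : ∀ {a b x y : C} (i : a ⟶ b) (k : x ⟶ y), cof i → cof k →
    cof (pushoutProduct i k)
  pp_weq : ∀ {a b x y : C} (i : a ⟶ b) (k : x ⟶ y), cof i → cof k →
    (weq i ∨ weq k) → weq (pushoutProduct i k)
  unit_axiom : ∀ (x : C), toModelStruct.Cofibrant x → ∀ {Q : C} (q : Q ⟶ 𝟙_ C),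
    toModelStruct.Cofibrant Q → weq q → weq ((x ◁ q) ≫ (ρ_ x).hom)

/-- A weak monoidal Quillen adjunction: a Quillen adjunction together with a lax monoidal
structure on the right adjoint, such that the corresponding (doctrinal) oplax monoidal
structure on the left adjoint has a comultiplication which is a weak equivalence on
cofibrant objects, and such that `F` applied to a cofibrant replacement of the unit,
composed with the oplax counit, is a weak equivalence. -/
structure WeakMonoidalQuillenAdjunction {W V : Type*} [Category W] [Category V]
    [MonoidalCategory W] [MonoidalCategory V]
    [HasPushouts W] [HasPushouts V] [HasInitial W] [HasInitial V]
    (MW : MonoidalModelStruct W) (MV : MonoidalModelStruct V)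
    (F : W ⥤ V) (G : V ⥤ W) [F.OplaxMonoidal] [G.LaxMonoidal] extends
      QuillenAdjunction MW.toModelStruct MV.toModelStruct F G where
  compat_counit : adj.homEquiv (𝟙_ W) (𝟙_ V) (OplaxMonoidal.η F) = LaxMonoidal.ε G
  compat_comul : ∀ x y : W, adj.homEquiv (x ⊗ y) (F.obj x ⊗ F.obj y)
      (OplaxMonoidal.δ F x y) =
    (adj.unit.app x ⊗ₘ adj.unit.app y) ≫ LaxMonoidal.μ G (F.obj x) (F.obj y)
  comul_weq : ∀ x y : W, MW.toModelStruct.Cofibrant x → MW.toModelStruct.Cofibrant y →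
    MV.weq (OplaxMonoidal.δ F x y)
  counit_weq : ∀ {Q : W} (q : Q ⟶ 𝟙_ W), MW.toModelStruct.Cofibrant Q → MW.weq q →
    MV.weq (F.map q ≫ OplaxMonoidal.η F)

/-- The canonical comparison map `G([F w, v]_V) ⟶ [w, G v]_W`: the adjunct, under the
internal-hom adjunction of `W`, of the composite
`w ⊗ G([F w, v]) → G(F w) ⊗ G([F w, v]) → G(F w ⊗ [F w, v]) → G v`
given by whiskering with the adjunction unit, the lax structure map of `G`, and `G`
applied to the evaluation. -/
noncomputable def comparisonMap {W V : Type*} [Category W] [Category V]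
    [MonoidalCategory W] [MonoidalCategory V] [MonoidalClosed W] [MonoidalClosed V]
    (F : W ⥤ V) (G : V ⥤ W) [G.LaxMonoidal] (adj : F ⊣ G) (w : W) (v : V) :
    G.obj ((ihom (F.obj w)).obj v) ⟶ (ihom w).obj (G.obj v) :=
  MonoidalClosed.curry
    (adj.unit.app w ▷ G.obj ((ihom (F.obj w)).obj v) ≫
      LaxMonoidal.μ G (F.obj w) ((ihom (F.obj w)).obj v) ≫
      G.map ((ihom.ev (F.obj w)).app v))

/-!
By Whitehead's theorem, a map between fibrant objects is a weak equivalence once it induces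
bijections on left homotopy classes out of every cofibrant `c`. For `φ_{w,v}` these maps are
identified, through the adjunctions `F ⊣ G` and `x ⊗ - ⊣ [x, -]` (Quillen for cofibrant `x` by
the pushout-product axiom), with precomposition `[F w ⊗ F c, v] → [F (w ⊗ c), v]` by the
comultiplication `δ_{w,c}`: a weak equivalence between cofibrant objects, hence bijective on
homotopy classes into the fibrant `v`.

`W` need not have a terminal object, so fibrancy is replaced throughout by the extension property
against trivial cofibrations (`TrivCofInjective`), which `G` and `[x, -]` preserve.
-/

attribute [local simp] coprod.inl_desc coprod.inr_desc coprod.inl_desc_assoc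
  coprod.inr_desc_assoc pushout.inl_desc pushout.inr_desc pushout.inl_desc_assoc
  pushout.inr_desc_assoc

lemma IsRetractOfMaps.of_fac {C : Type*} [Category C] {X Y Z : C} {f : X ⟶ Y} {g : X ⟶ Z}
    {h : Z ⟶ Y} (fac : g ≫ h = f) [HasLiftingProperty f h] : IsRetractOfMaps f g := by
  have sq : CommSq g f h (𝟙 Y) := ⟨by simp [fac]⟩
  exact ⟨𝟙 X, 𝟙 X, sq.lift, h, by simp, sq.fac_right, by simp [sq.fac_left], by simp [fac]⟩

lemma HasLiftingProperty.coprod_map {C : Type*} [Category C] [HasBinaryCoproducts C]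
    {A B A' B' X Y : C} (i : A ⟶ B) (i' : A' ⟶ B') (p : X ⟶ Y)
    [HasLiftingProperty i p] [HasLiftingProperty i' p] :
    HasLiftingProperty (coprod.map i i') p where
  sq_hasLift {t b} sq := by
    have sq₁ : CommSq (coprod.inl ≫ t) i p (coprod.inl ≫ b) := ⟨by simp [sq.w]⟩
    have sq₂ : CommSq (coprod.inr ≫ t) i' p (coprod.inr ≫ b) := ⟨by simp [sq.w]⟩
    exact ⟨⟨{ l := coprod.desc sq₁.lift sq₂.lift
              fac_left := by ext <;> simp
              fac_right := by ext <;> simp }⟩⟩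

namespace ModelStruct

variable {C : Type*} [Category C] {M : ModelStruct C}

lemma cof_of_llp_trivFib {X Y : C} {f : X ⟶ Y}
    (H : ∀ {A B : C} (p : A ⟶ B), M.fib p → M.weq p → HasLiftingProperty f p) : M.cof f := by
  obtain ⟨Z, g, h, hg, hh, hhw, fac⟩ := M.factor_cof_trivFib f
  have := H h hh hhw
  exact M.cof_retract f g (.of_fac fac) hg

lemma cof_and_weq_of_llp_fib {X Y : C} {f : X ⟶ Y}
    (H : ∀ {A B : C} (p : A ⟶ B), M.fib p → HasLiftingProperty f p) : M.cof f ∧ M.weq f := by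
  obtain ⟨Z, g, h, hg, hgw, hh, fac⟩ := M.factor_trivCof_fib f
  have := H h hh
  exact ⟨M.cof_retract f g (.of_fac fac) hg, M.weq_retract f g (.of_fac fac) hgw⟩

lemma cof_of_isIso {X Y : C} (f : X ⟶ Y) [IsIso f] : M.cof f :=
  cof_of_llp_trivFib fun _ _ _ => inferInstance

lemma weq_of_isIso {X Y : C} (f : X ⟶ Y) [IsIso f] : M.weq f :=
  M.weq_retract f (𝟙 X) ⟨𝟙 X, 𝟙 X, inv f, f, by simp, by simp, by simp, by simp⟩ (M.weq_id X)

lemma cof_comp_s5 {X Y Z : C} {f : X ⟶ Y} {g : Y ⟶ Z} (hf : M.cof f) (hg : M.cof g) :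
    M.cof (f ≫ g) :=
  cof_of_llp_trivFib fun p hp hpw =>
    have := M.lift f p hf hp (.inr hpw)
    have := M.lift g p hg hp (.inr hpw)
    inferInstance

lemma cof_of_isPushout {X Y Z P : C} {f : X ⟶ Y} {g : X ⟶ Z} {h : Y ⟶ P} {k : Z ⟶ P}
    (sq : IsPushout f g h k) (hf : M.cof f) : M.cof k :=
  cof_of_llp_trivFib fun p hp hpw =>
    have := M.lift f p hf hp (.inr hpw)
    sq.flip.hasLiftingProperty p

lemma cof_and_weq_of_isPushout {X Y Z P : C} {f : X ⟶ Y} {g : X ⟶ Z} {h : Y ⟶ P} {k : Z ⟶ P}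
    (sq : IsPushout f g h k) (hf : M.cof f) (hfw : M.weq f) : M.cof k ∧ M.weq k :=
  cof_and_weq_of_llp_fib fun p hp =>
    have := M.lift f p hf hp (.inl hfw)
    sq.flip.hasLiftingProperty p

lemma cof_and_weq_coprod_map [HasBinaryCoproducts C] {A B A' B' : C} {i : A ⟶ B} {i' : A' ⟶ B'}
    (hi : M.cof i) (hiw : M.weq i) (hi' : M.cof i') (hiw' : M.weq i') :
    M.cof (coprod.map i i') ∧ M.weq (coprod.map i i') :=
  cof_and_weq_of_llp_fib fun p hp =>
    have := M.lift i p hi hp (.inl hiw)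
    have := M.lift i' p hi' hp (.inl hiw')
    HasLiftingProperty.coprod_map i i' p

lemma weq_of_comp_eq_id {X Y : C} {f : X ⟶ Y} {g : Y ⟶ X} (hf : M.weq f) (h : f ≫ g = 𝟙 X) :
    M.weq g :=
  M.weq_of_precomp f g hf (h ▸ M.weq_id X)

lemma weq_of_comp_eq_id' {X Y : C} {f : X ⟶ Y} {g : Y ⟶ X} (hg : M.weq g) (h : f ≫ g = 𝟙 X) :
    M.weq f :=
  M.weq_of_postcomp f g hg (h ▸ M.weq_id X)

section Cofibrant

variable [HasInitial C]

lemma cofibrant_of_cof {X Y : C} {g : X ⟶ Y} (hX : M.Cofibrant X) (hg : M.cof g) :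
    M.Cofibrant Y := by
  rw [ModelStruct.Cofibrant, initial.hom_ext (initial.to Y) (initial.to X ≫ g)]
  exact cof_comp_s5 hX hg

lemma exists_cofibrant_replacement (M : ModelStruct C) (X : C) :
    ∃ (Q : C) (p : Q ⟶ X), M.Cofibrant Q ∧ M.fib p ∧ M.weq p := by
  obtain ⟨Q, i, p, hi, hp, hpw, -⟩ := M.factor_cof_trivFib (initial.to X)
  exact ⟨Q, p, by rwa [Cofibrant, initial.hom_ext (initial.to Q) i], hp, hpw⟩

lemma cof_coprod_inl [HasBinaryCoproducts C] {X Y : C} (hY : M.Cofibrant Y) :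
    M.cof (coprod.inl : X ⟶ X ⨿ Y) :=
  cof_of_isPushout (IsPushout.of_hasBinaryCoproduct' X Y).flip hY

lemma cof_coprod_inr [HasBinaryCoproducts C] {X Y : C} (hX : M.Cofibrant X) :
    M.cof (coprod.inr : Y ⟶ X ⨿ Y) :=
  cof_of_isPushout (IsPushout.of_hasBinaryCoproduct' X Y) hX

end Cofibrant

def TrivCofInjective (M : ModelStruct C) (Y : C) : Prop :=
  ∀ ⦃A B : C⦄ (j : A ⟶ B), M.cof j → M.weq j → ∀ t : A ⟶ Y, ∃ s : B ⟶ Y, j ≫ s = t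

lemma TrivCofInjective.of_fib {Z Y : C} {q : Z ⟶ Y} (hq : M.fib q) (hY : M.TrivCofInjective Y) :
    M.TrivCofInjective Z := by
  intro A B j hj hjw t
  obtain ⟨e, he⟩ := hY j hj hjw (t ≫ q)
  have := M.lift j q hj hq (.inl hjw)
  have sq : CommSq t j q e := ⟨he.symm⟩
  exact ⟨sq.lift, sq.fac_left⟩

lemma trivCofInjective_of_fibrant [HasTerminal C] {Y : C} (hY : M.Fibrant Y) :
    M.TrivCofInjective Y := by
  intro A B j hj hjw t
  have := M.lift j (terminal.from Y) hj hY (.inl hjw)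
  have sq : CommSq t j (terminal.from Y) (terminal.from B) := ⟨terminal.hom_ext _ _⟩
  exact ⟨sq.lift, sq.fac_left⟩

section Homotopy

variable [HasBinaryCoproducts C]

structure Cylinder (M : ModelStruct C) (X : C) where
  ob : C
  i₀ : X ⟶ ob
  i₁ : X ⟶ ob
  p : ob ⟶ X
  cof_desc : M.cof (coprod.desc i₀ i₁)
  weq_p : M.weq p
  i₀_p : i₀ ≫ p = 𝟙 X
  i₁_p : i₁ ≫ p = 𝟙 X

lemma exists_cylinder (M : ModelStruct C) (X : C) : ∃ c : M.Cylinder X, M.fib c.p := by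
  obtain ⟨Z, g, h, hg, hh, hhw, fac⟩ := M.factor_cof_trivFib (codiag X)
  have hi₀ : (coprod.inl ≫ g) ≫ h = 𝟙 X := by rw [assoc, fac, coprod.inl_desc]
  have hi₁ : (coprod.inr ≫ g) ≫ h = 𝟙 X := by rw [assoc, fac, coprod.inr_desc]
  refine ⟨⟨Z, coprod.inl ≫ g, coprod.inr ≫ g, h, ?_, hhw, hi₀, hi₁⟩, hh⟩
  rwa [← coprod.desc_comp, coprod.desc_inl_inr, id_comp]

namespace Cylinder

variable {X : C} (c : M.Cylinder X)

lemma weq_i₀ : M.weq c.i₀ := weq_of_comp_eq_id' c.weq_p c.i₀_p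

lemma weq_i₁ : M.weq c.i₁ := weq_of_comp_eq_id' c.weq_p c.i₁_p

lemma exists_lift {E B : C} {p : E ⟶ B} (hp : M.fib p) (hpw : M.weq p) {a b : X ⟶ E}
    (H : c.ob ⟶ B) (h₀ : c.i₀ ≫ H = a ≫ p) (h₁ : c.i₁ ≫ H = b ≫ p) :
    ∃ L : c.ob ⟶ E, c.i₀ ≫ L = a ∧ c.i₁ ≫ L = b := by
  have := M.lift _ p c.cof_desc hp (.inr hpw)
  have sq : CommSq (coprod.desc a b) (coprod.desc c.i₀ c.i₁) p H :=
    ⟨by ext <;> simp [h₀, h₁]⟩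
  exact ⟨sq.lift,
    by simpa only [coprod.inl_desc_assoc, coprod.inl_desc] using coprod.inl ≫= sq.fac_left,
    by simpa only [coprod.inr_desc_assoc, coprod.inr_desc] using coprod.inr ≫= sq.fac_left⟩

lemma exists_map {X' : C} (c' : M.Cylinder X') (hc : M.fib c.p) (e : X' ⟶ X) :
    ∃ k : c'.ob ⟶ c.ob, c'.i₀ ≫ k = e ≫ c.i₀ ∧ c'.i₁ ≫ k = e ≫ c.i₁ :=
  c'.exists_lift hc c.weq_p (c'.p ≫ e)
    (by rw [← assoc, c'.i₀_p, id_comp, assoc, c.i₀_p, comp_id])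
    (by rw [← assoc, c'.i₁_p, id_comp, assoc, c.i₁_p, comp_id])

lemma exists_trivCof_fib :
    ∃ (c' : M.Cylinder X) (k : c.ob ⟶ c'.ob), M.cof k ∧ M.weq k ∧ M.fib c'.p ∧
      c.i₀ ≫ k = c'.i₀ ∧ c.i₁ ≫ k = c'.i₁ := by
  obtain ⟨Z, k, q, hk, hq, hqw, fac⟩ := M.factor_cof_trivFib c.p
  refine ⟨⟨Z, c.i₀ ≫ k, c.i₁ ≫ k, q, ?_, hqw, by rw [assoc, fac, c.i₀_p],
    by rw [assoc, fac, c.i₁_p]⟩, k, hk, M.weq_of_postcomp k q hqw (fac ▸ c.weq_p), hq, rfl, rfl⟩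
  rw [← coprod.desc_comp]
  exact cof_comp_s5 c.cof_desc hk

variable [HasInitial C]

lemma cof_i₀ (hX : M.Cofibrant X) : M.cof c.i₀ := by
  rw [← coprod.inl_desc c.i₀ c.i₁]
  exact cof_comp_s5 (cof_coprod_inl hX) c.cof_desc

lemma cof_i₁ (hX : M.Cofibrant X) : M.cof c.i₁ := by
  rw [← coprod.inr_desc c.i₀ c.i₁]
  exact cof_comp_s5 (cof_coprod_inr hX) c.cof_desc

end Cylinder

def LeftHomotopic (M : ModelStruct C) {X Y : C} (f g : X ⟶ Y) : Prop :=
  ∃ (c : M.Cylinder X) (H : c.ob ⟶ Y), c.i₀ ≫ H = f ∧ c.i₁ ≫ H = g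

namespace LeftHomotopic

variable {X Y : C}

lemma refl (f : X ⟶ Y) : M.LeftHomotopic f f := by
  obtain ⟨c, -⟩ := M.exists_cylinder X
  exact ⟨c, c.p ≫ f, by rw [← assoc, c.i₀_p, id_comp], by rw [← assoc, c.i₁_p, id_comp]⟩

lemma of_eq {f g : X ⟶ Y} (h : f = g) : M.LeftHomotopic f g := h ▸ refl f

lemma symm {f g : X ⟶ Y} (h : M.LeftHomotopic f g) : M.LeftHomotopic g f := by
  obtain ⟨c, H, h₀, h₁⟩ := h
  refine ⟨⟨c.ob, c.i₁, c.i₀, c.p, ?_, c.weq_p, c.i₁_p, c.i₀_p⟩, H, h₁, h₀⟩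
  have : coprod.desc c.i₁ c.i₀ = (coprod.braiding X X).hom ≫ coprod.desc c.i₀ c.i₁ := by
    ext <;> simp [coprod.braiding]
  rw [this]
  exact cof_comp_s5 (cof_of_isIso _) c.cof_desc

lemma postcomp {f g : X ⟶ Y} (h : M.LeftHomotopic f g) {Z : C} (k : Y ⟶ Z) :
    M.LeftHomotopic (f ≫ k) (g ≫ k) := by
  obtain ⟨c, H, h₀, h₁⟩ := h
  exact ⟨c, H ≫ k, by rw [← assoc, h₀], by rw [← assoc, h₁]⟩

lemma exists_homotopy {f g : X ⟶ Y} (h : M.LeftHomotopic f g) (hY : M.TrivCofInjective Y)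
    (c : M.Cylinder X) : ∃ H : c.ob ⟶ Y, c.i₀ ≫ H = f ∧ c.i₁ ≫ H = g := by
  obtain ⟨c₁, H₁, h₀, h₁⟩ := h
  obtain ⟨c₂, k, hk, hkw, hp, hk₀, hk₁⟩ := c₁.exists_trivCof_fib
  obtain ⟨H₂, hH₂⟩ := hY k hk hkw H₁
  obtain ⟨m, hm₀, hm₁⟩ := c₂.exists_map c hp (𝟙 X)
  refine ⟨m ≫ H₂, ?_, ?_⟩
  · rw [← assoc, hm₀, id_comp, ← hk₀, assoc, hH₂, h₀]
  · rw [← assoc, hm₁, id_comp, ← hk₁, assoc, hH₂, h₁]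

lemma precomp {f g : X ⟶ Y} (h : M.LeftHomotopic f g) (hY : M.TrivCofInjective Y) {X' : C}
    (e : X' ⟶ X) : M.LeftHomotopic (e ≫ f) (e ≫ g) := by
  obtain ⟨c, hc⟩ := M.exists_cylinder X
  obtain ⟨H, h₀, h₁⟩ := h.exists_homotopy hY c
  obtain ⟨c', -⟩ := M.exists_cylinder X'
  obtain ⟨k, hk₀, hk₁⟩ := c.exists_map c' hc e
  exact ⟨c', k ≫ H, by rw [← assoc, hk₀, assoc, h₀], by rw [← assoc, hk₁, assoc, h₁]⟩

lemma of_postcomp_trivFib {Z : C} {p : Y ⟶ Z} (hp : M.fib p) (hpw : M.weq p) {f g : X ⟶ Y}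
    (h : M.LeftHomotopic (f ≫ p) (g ≫ p)) : M.LeftHomotopic f g := by
  obtain ⟨c, H, h₀, h₁⟩ := h
  obtain ⟨L, hL₀, hL₁⟩ := c.exists_lift hp hpw H h₀ h₁
  exact ⟨c, L, hL₀, hL₁⟩

/-- Homotopy extension: gluing the cylinder of `A` to `X ⨿ X` along `j ⨿ j` gives a cylinder
of `X`. -/
lemma of_precomp_trivCof [HasPushouts C] {A : C} {j : A ⟶ X} (hj : M.cof j) (hjw : M.weq j)
    {u u' : X ⟶ Y} (h : M.LeftHomotopic (j ≫ u) (j ≫ u')) : M.LeftHomotopic u u' := by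
  obtain ⟨c, H, h₀, h₁⟩ := h
  have sq := IsPushout.of_hasPushout (coprod.desc c.i₀ c.i₁) (coprod.map j j)
  have hjj := cof_and_weq_coprod_map hj hjw hj hjw
  have hinl := cof_and_weq_of_isPushout sq.flip hjj.1 hjj.2
  have w : coprod.desc c.i₀ c.i₁ ≫ c.p ≫ j = coprod.map j j ≫ codiag X := by
    ext <;> simp [reassoc_of% c.i₀_p, reassoc_of% c.i₁_p]
  have hdesc : coprod.desc (coprod.inl ≫ pushout.inr _ _) (coprod.inr ≫ pushout.inr _ _) =
      pushout.inr (coprod.desc c.i₀ c.i₁) (coprod.map j j) := by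
    ext <;> simp
  have hwH : coprod.desc c.i₀ c.i₁ ≫ H = coprod.map j j ≫ coprod.desc u u' := by
    ext <;> simp [h₀, h₁]
  refine ⟨⟨pushout _ _, coprod.inl ≫ pushout.inr _ _, coprod.inr ≫ pushout.inr _ _,
    pushout.desc (c.p ≫ j) (codiag X) w, ?_, ?_, by simp, by simp⟩,
    pushout.desc H (coprod.desc u u') hwH, by simp, by simp⟩
  · rw [hdesc]
    exact cof_of_isPushout sq c.cof_desc
  · refine M.weq_of_precomp _ _ hinl.2 ?_
    rw [pushout.inl_desc]
    exact M.weq_comp _ _ c.weq_p hjw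

end LeftHomotopic

section Concat

variable [HasPushouts C] [HasInitial C] {X Y : C}

namespace Cylinder

variable (c : M.Cylinder X)

lemma cof_desc_concat (hX : M.Cofibrant X) :
    M.cof (coprod.desc (c.i₀ ≫ pushout.inl c.i₁ c.i₀) (c.i₁ ≫ pushout.inr c.i₁ c.i₀)) := by
  have sq := IsPushout.of_hasPushout c.i₁ c.i₀
  -- pasted to the left with the cobase change of `c.i₁` along `inl : X ⟶ X ⨿ X`, `right` gives `sq`
  have right : IsPushout (coprod.desc c.i₀ c.i₁) (coprod.map c.i₁ (𝟙 X)) (pushout.inr _ _)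
      (coprod.desc (pushout.inl c.i₁ c.i₀) (c.i₁ ≫ pushout.inr _ _)) :=
    IsPushout.of_left (by simpa using sq.flip) (by ext <;> simp [sq.w])
      (IsPushout.of_coprod_inl_with_id c.i₁ X)
  have fac : coprod.desc (c.i₀ ≫ pushout.inl c.i₁ c.i₀) (c.i₁ ≫ pushout.inr c.i₁ c.i₀) =
      coprod.map c.i₀ (𝟙 X) ≫ coprod.desc (pushout.inl _ _) (c.i₁ ≫ pushout.inr _ _) := by
    ext <;> simp
  rw [fac]
  exact cof_comp_s5 (cof_of_isPushout (IsPushout.of_coprod_inl_with_id c.i₀ X).flip (c.cof_i₀ hX))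
    (cof_of_isPushout right c.cof_desc)

noncomputable def concat (hX : M.Cofibrant X) : M.Cylinder X where
  ob := pushout c.i₁ c.i₀
  i₀ := c.i₀ ≫ pushout.inl _ _
  i₁ := c.i₁ ≫ pushout.inr _ _
  p := pushout.desc c.p c.p (by rw [c.i₁_p, c.i₀_p])
  cof_desc := c.cof_desc_concat hX
  weq_p := by
    have hinl := cof_and_weq_of_isPushout (IsPushout.of_hasPushout c.i₁ c.i₀).flip
      (c.cof_i₀ hX) c.weq_i₀
    exact weq_of_comp_eq_id (M.weq_comp _ _ c.weq_i₀ hinl.2) (by simp [c.i₀_p])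
  i₀_p := by simp [c.i₀_p]
  i₁_p := by simp [c.i₁_p]

end Cylinder

lemma LeftHomotopic.trans (hX : M.Cofibrant X) (hY : M.TrivCofInjective Y) {f g k : X ⟶ Y}
    (h₁ : M.LeftHomotopic f g) (h₂ : M.LeftHomotopic g k) : M.LeftHomotopic f k := by
  obtain ⟨c, -⟩ := M.exists_cylinder X
  obtain ⟨H₁, h₁₀, h₁₁⟩ := h₁.exists_homotopy hY c
  obtain ⟨H₂, h₂₀, h₂₁⟩ := h₂.exists_homotopy hY c
  exact ⟨c.concat hX, pushout.desc H₁ H₂ (h₁₁.trans h₂₀.symm), by simp [Cylinder.concat, h₁₀],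
    by simp [Cylinder.concat, h₂₁]⟩

lemma leftHomotopic_equivalence (hX : M.Cofibrant X) (hY : M.TrivCofInjective Y) :
    Equivalence (M.LeftHomotopic (X := X) (Y := Y)) :=
  ⟨.refl, .symm, .trans hX hY⟩

end Concat

lemma exists_retraction_of_trivCof [HasPushouts C] {Y Z : C} {j : Y ⟶ Z} (hj : M.cof j)
    (hjw : M.weq j) (hY : M.TrivCofInjective Y) :
    ∃ r : Z ⟶ Y, j ≫ r = 𝟙 Y ∧ M.LeftHomotopic (r ≫ j) (𝟙 Z) := by
  obtain ⟨r, hr⟩ := hY j hj hjw (𝟙 Y)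
  exact ⟨r, hr, .of_precomp_trivCof hj hjw (.of_eq (by rw [reassoc_of% hr, comp_id]))⟩

def HomotopyClasses (M : ModelStruct C) (X Y : C) : Type _ :=
  Quot (M.LeftHomotopic (X := X) (Y := Y))

namespace HomotopyClasses

variable {X Y : C}

def postcomp {Y' : C} (k : Y ⟶ Y') : M.HomotopyClasses X Y → M.HomotopyClasses X Y' :=
  Quot.map (· ≫ k) fun _ _ h => h.postcomp k

def precomp {X' : C} (e : X' ⟶ X) (hY : M.TrivCofInjective Y) :
    M.HomotopyClasses X Y → M.HomotopyClasses X' Y :=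
  Quot.map (e ≫ ·) fun _ _ h => h.precomp hY e

lemma postcomp_comp {Y' Y'' : C} (k : Y ⟶ Y') (k' : Y' ⟶ Y'') :
    (postcomp (k ≫ k') : M.HomotopyClasses X Y → _) = postcomp k' ∘ postcomp k :=
  funext <| Quot.ind fun f => congrArg (Quot.mk _) (assoc f k k').symm

lemma precomp_comp {X' X'' : C} (e : X'' ⟶ X') (e' : X' ⟶ X) (hY : M.TrivCofInjective Y) :
    (precomp (e ≫ e') hY : M.HomotopyClasses X Y → _) = precomp e hY ∘ precomp e' hY :=
  funext <| Quot.ind fun f => congrArg (Quot.mk _) (assoc e e' f)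

variable [HasInitial C]

lemma bijective_precomp_of_trivFib {W : C} {q : X ⟶ W} (hq : M.fib q) (hqw : M.weq q)
    (hW : M.Cofibrant W) (hY : M.TrivCofInjective Y) :
    Function.Bijective (precomp q hY : M.HomotopyClasses W Y → M.HomotopyClasses X Y) := by
  have := M.lift (initial.to W) q hW hq (.inr hqw)
  have sq : CommSq (initial.to X) (initial.to W) q (𝟙 W) := ⟨initial.hom_ext _ _⟩
  have hqs : M.LeftHomotopic (q ≫ sq.lift) (𝟙 X) :=
    .of_postcomp_trivFib hq hqw (.of_eq (by simp))
  refine Function.bijective_iff_has_inverse.2 ⟨precomp sq.lift hY, fun a => ?_, fun a => ?_⟩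
  · induction a using Quot.ind with | _ f
    exact congrArg (Quot.mk _) (by simp)
  · induction a using Quot.ind with | _ g
    exact Quot.sound (by simpa using hqs.postcomp g)

variable [HasPushouts C]

lemma mk_eq_mk_iff (hX : M.Cofibrant X) (hY : M.TrivCofInjective Y) {f g : X ⟶ Y} :
    (Quot.mk _ f : M.HomotopyClasses X Y) = Quot.mk _ g ↔ M.LeftHomotopic f g := by
  rw [Quot.eq]
  exact (leftHomotopic_equivalence hX hY).eqvGen_iff

lemma bijective_postcomp_of_trivFib (hX : M.Cofibrant X) {Z : C} (hZ : M.TrivCofInjective Z)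
    {p : Y ⟶ Z} (hp : M.fib p) (hpw : M.weq p) :
    Function.Bijective (postcomp p : M.HomotopyClasses X Y → M.HomotopyClasses X Z) := by
  refine ⟨fun a b hab => ?_, fun b => ?_⟩
  · induction a using Quot.ind
    induction b using Quot.ind
    exact Quot.sound (.of_postcomp_trivFib hp hpw ((mk_eq_mk_iff hX hZ).1 hab))
  · induction b using Quot.ind with | _ f
    have := M.lift (initial.to X) p hX hp (.inr hpw)
    have sq : CommSq (initial.to Y) (initial.to X) p f := ⟨initial.hom_ext _ _⟩
    exact ⟨Quot.mk _ sq.lift, congrArg (Quot.mk _) sq.fac_right⟩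

lemma bijective_postcomp_of_trivCof (hX : M.Cofibrant X) {Z : C} {j : Y ⟶ Z} (hj : M.cof j)
    (hjw : M.weq j) (hY : M.TrivCofInjective Y) (hZ : M.TrivCofInjective Z) :
    Function.Bijective (postcomp j : M.HomotopyClasses X Y → M.HomotopyClasses X Z) := by
  obtain ⟨r, hr, hrj⟩ := exists_retraction_of_trivCof hj hjw hY
  refine ⟨fun a b hab => ?_, fun b => ?_⟩
  · induction a using Quot.ind with | _ f
    induction b using Quot.ind with | _ g
    have h := ((mk_eq_mk_iff hX hZ).1 hab).postcomp r
    simp only [assoc, hr, comp_id] at h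
    exact Quot.sound h
  · induction b using Quot.ind with | _ f
    refine ⟨Quot.mk _ (f ≫ r), Quot.sound ?_⟩
    simpa using hrj.precomp hZ f

lemma bijective_precomp_of_trivCof {A : C} {j : A ⟶ X} (hj : M.cof j) (hjw : M.weq j)
    (hA : M.Cofibrant A) (hY : M.TrivCofInjective Y) :
    Function.Bijective (precomp j hY : M.HomotopyClasses X Y → M.HomotopyClasses A Y) := by
  refine ⟨fun a b hab => ?_, fun b => ?_⟩
  · induction a using Quot.ind
    induction b using Quot.ind
    exact Quot.sound (.of_precomp_trivCof hj hjw ((mk_eq_mk_iff hA hY).1 hab))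
  · induction b using Quot.ind with | _ g
    obtain ⟨s, hs⟩ := hY j hj hjw g
    exact ⟨Quot.mk _ s, congrArg (Quot.mk _) hs⟩

lemma bijective_precomp_of_weq {W : C} {e : X ⟶ W} (he : M.weq e) (hX : M.Cofibrant X)
    (hW : M.Cofibrant W) (hY : M.TrivCofInjective Y) :
    Function.Bijective (precomp e hY : M.HomotopyClasses W Y → M.HomotopyClasses X Y) := by
  obtain ⟨Z, j, q, hj, hjw, hq, fac⟩ := M.factor_trivCof_fib e
  have hqw : M.weq q := M.weq_of_precomp j q hjw (fac ▸ he)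
  rw [← fac, precomp_comp]
  exact (bijective_precomp_of_trivCof hj hjw hX hY).comp (bijective_precomp_of_trivFib hq hqw hW hY)

end HomotopyClasses

section Whitehead

variable [HasInitial C]

/-- `q` is a retract of the homotopy `H : q ≫ σ ≃ 𝟙`, a weak equivalence since `i₁ ≫ H = 𝟙`. -/
lemma weq_of_fib_of_section {T Y : C} {q : T ⟶ Y} (hq : M.fib q) (hT : M.Cofibrant T)
    {σ : Y ⟶ T} (hσ : σ ≫ q = 𝟙 Y) (h : M.LeftHomotopic (q ≫ σ) (𝟙 T)) : M.weq q := by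
  obtain ⟨c, H, h₀, h₁⟩ := h
  have hHw : M.weq H := weq_of_comp_eq_id c.weq_i₁ h₁
  have := M.lift c.i₀ q (c.cof_i₀ hT) hq (.inl c.weq_i₀)
  have sq : CommSq (𝟙 T) c.i₀ q (H ≫ q) := ⟨by rw [id_comp, reassoc_of% h₀, hσ, comp_id]⟩
  exact M.weq_retract q H ⟨c.i₀, sq.lift, σ, q, sq.fac_left, hσ, h₀, sq.fac_right.symm⟩ hHw

variable [HasPushouts C]

lemma weq_of_fib_of_leftHomotopic_inverse {T Y : C} {q : T ⟶ Y} (hq : M.fib q)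
    (hT : M.Cofibrant T) (hTi : M.TrivCofInjective T) (hY : M.Cofibrant Y) {t : Y ⟶ T}
    (htq : M.LeftHomotopic (t ≫ q) (𝟙 Y)) (hqt : M.LeftHomotopic (q ≫ t) (𝟙 T)) :
    M.weq q := by
  -- Lifting the homotopy `t ≫ q ≃ 𝟙` along `q`, starting at `t`, ends at a strict section.
  obtain ⟨c, H, h₀, h₁⟩ := htq
  have := M.lift c.i₀ q (c.cof_i₀ hY) hq (.inl c.weq_i₀)
  have sq : CommSq t c.i₀ q H := ⟨h₀.symm⟩
  have hσ : (c.i₁ ≫ sq.lift) ≫ q = 𝟙 Y := by rw [assoc, sq.fac_right, h₁]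
  have htσ : M.LeftHomotopic t (c.i₁ ≫ sq.lift) := ⟨c, sq.lift, sq.fac_left, rfl⟩
  exact weq_of_fib_of_section hq hT hσ ((htσ.precomp hTi q).symm.trans hT hTi hqt)

lemma weq_of_leftHomotopic_inverse {Z Y : C} {u : Z ⟶ Y} (hZ : M.Cofibrant Z)
    (hZi : M.TrivCofInjective Z) (hY : M.Cofibrant Y) (hYi : M.TrivCofInjective Y) {s : Y ⟶ Z}
    (hsu : M.LeftHomotopic (s ≫ u) (𝟙 Y)) (hus : M.LeftHomotopic (u ≫ s) (𝟙 Z)) : M.weq u := by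
  obtain ⟨T, k, q, hk, hkw, hq, fac⟩ := M.factor_trivCof_fib u
  have hT : M.Cofibrant T := cofibrant_of_cof hZ hk
  have hTi : M.TrivCofInjective T := .of_fib hq hYi
  obtain ⟨r, -, hrk⟩ := exists_retraction_of_trivCof hk hkw hZi
  have hq_ru : M.LeftHomotopic (r ≫ u) q := by simpa [fac] using hrk.postcomp q
  have hqsk : M.LeftHomotopic (q ≫ s ≫ k) (𝟙 T) := by
    refine (hq_ru.postcomp (s ≫ k)).symm.trans hT hTi (.trans hT hTi ?_ hrk)
    simpa using (hus.precomp hZi r).postcomp k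
  have hqw := weq_of_fib_of_leftHomotopic_inverse hq hT hTi hY (t := s ≫ k)
    (by rwa [assoc, fac]) hqsk
  exact fac ▸ M.weq_comp k q hkw hqw

open HomotopyClasses Function

lemma weq_of_bijective_postcomp_of_cofibrant {Z Y : C} {u : Z ⟶ Y} (hZ : M.Cofibrant Z)
    (hZi : M.TrivCofInjective Z) (hY : M.Cofibrant Y) (hYi : M.TrivCofInjective Y)
    (hu : ∀ X, M.Cofibrant X →
      Bijective (postcomp u : M.HomotopyClasses X Z → M.HomotopyClasses X Y)) :
    M.weq u := by
  obtain ⟨s, hs⟩ := (hu Y hY).2 (Quot.mk _ (𝟙 Y))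
  induction s using Quot.ind with | _ s
  have hsu : M.LeftHomotopic (s ≫ u) (𝟙 Y) := (mk_eq_mk_iff hY hYi).1 hs
  have hus : M.LeftHomotopic (u ≫ s) (𝟙 Z) := by
    refine (mk_eq_mk_iff hZ hZi).1 ((hu Z hZ).1 ((mk_eq_mk_iff hZ hYi).2 ?_))
    simpa using hsu.precomp hYi u
  exact weq_of_leftHomotopic_inverse hZ hZi hY hYi hsu hus

theorem weq_of_bijective_postcomp {D E : C} (φ : D ⟶ E) (hD : M.TrivCofInjective D)
    (hE : M.TrivCofInjective E)
    (hφ : ∀ X, M.Cofibrant X →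
      Bijective (postcomp φ : M.HomotopyClasses X D → M.HomotopyClasses X E)) :
    M.weq φ := by
  obtain ⟨QD, p, hQD, hp, hpw⟩ := M.exists_cofibrant_replacement D
  obtain ⟨QE, pE, hQE, hpE, hpEw⟩ := M.exists_cofibrant_replacement E
  obtain ⟨Z, j, q, hj, hjw, hq, fac⟩ := M.factor_trivCof_fib (p ≫ φ)
  have hZ : M.Cofibrant Z := cofibrant_of_cof hQD hj
  have hZi : M.TrivCofInjective Z := .of_fib hq hE
  -- Up to the trivial (co)fibrations `p`, `j`, `pE`, `φ` is the map `sq.lift : Z ⟶ QE` between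
  -- cofibrant `TrivCofInjective` objects.
  have := M.lift (initial.to Z) pE hZ hpE (.inr hpEw)
  have sq : CommSq (initial.to QE) (initial.to Z) pE q := ⟨initial.hom_ext _ _⟩
  have hu : ∀ X, M.Cofibrant X →
      Bijective (postcomp sq.lift : M.HomotopyClasses X Z → M.HomotopyClasses X QE) := by
    intro X hX
    have hpφ : Bijective (postcomp (p ≫ φ) : M.HomotopyClasses X QD → _) := by
      rw [postcomp_comp]
      exact (hφ X hX).comp (bijective_postcomp_of_trivFib hX hD hp hpw)
    rw [← fac, postcomp_comp] at hpφ
    have hq' := (Bijective.of_comp_iff _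
      (bijective_postcomp_of_trivCof hX hj hjw (.of_fib hp hD) hZi)).1 hpφ
    rw [← sq.fac_right, postcomp_comp] at hq'
    exact (Bijective.of_comp_iff' (bijective_postcomp_of_trivFib hX hE hpE hpEw) _).1 hq'
  have huw := weq_of_bijective_postcomp_of_cofibrant hZ hZi hQE (.of_fib hpE hE) hu
  have hqw : M.weq q := sq.fac_right ▸ M.weq_comp _ _ huw hpEw
  exact M.weq_of_precomp p φ hpw (fac ▸ M.weq_comp j q hjw hqw)

end Whitehead

end Homotopy

end ModelStruct

namespace QuillenAdjunction

open ModelStruct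

variable {C D : Type*} [Category C] [Category D] {M : ModelStruct C} {N : ModelStruct D}
  {L : C ⥤ D} {R : D ⥤ C}

lemma trivCofInjective_obj (Q : QuillenAdjunction M N L R) {Y : D} (hY : N.TrivCofInjective Y) :
    M.TrivCofInjective (R.obj Y) := by
  intro A B j hj hjw t
  obtain ⟨s, hs⟩ :=
    hY (L.map j) (Q.F_cof j hj) (Q.F_trivCof j hj hjw) ((Q.adj.homEquiv A Y).symm t)
  refine ⟨Q.adj.homEquiv B Y s, ?_⟩
  rw [← Q.adj.homEquiv_naturality_left, hs, Equiv.apply_symm_apply]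

lemma cofibrant_obj [HasInitial C] [HasInitial D] (Q : QuillenAdjunction M N L R) {X : C}
    (hX : M.Cofibrant X) : N.Cofibrant (L.obj X) := by
  have := Q.adj.isLeftAdjoint
  have hL : IsInitial (L.obj (⊥_ C)) := initialIsInitial.isInitialObj L _
  rw [Cofibrant, initial.hom_ext (initial.to _)
    ((initialIsInitial.uniqueUpToIso hL).hom ≫ L.map (initial.to X))]
  exact cof_comp_s5 (cof_of_isIso _) (Q.F_cof _ hX)

variable [HasBinaryCoproducts C] [HasBinaryCoproducts D]

noncomputable def mapCylinder [HasInitial C] (Q : QuillenAdjunction M N L R) {X : C}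
    (hX : M.Cofibrant X) (c : M.Cylinder X) : N.Cylinder (L.obj X) where
  ob := L.obj c.ob
  i₀ := L.map c.i₀
  i₁ := L.map c.i₁
  p := L.map c.p
  cof_desc := by
    have := Q.adj.isLeftAdjoint
    have : coprod.desc (L.map c.i₀) (L.map c.i₁) =
        coprodComparison L X X ≫ L.map (coprod.desc c.i₀ c.i₁) := by
      ext <;> simp [← L.map_comp]
    rw [this]
    exact cof_comp_s5 (cof_of_isIso _) (Q.F_cof _ c.cof_desc)
  weq_p := weq_of_comp_eq_id (Q.F_trivCof _ (c.cof_i₀ hX) c.weq_i₀)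
    (by rw [← L.map_comp, c.i₀_p, L.map_id])
  i₀_p := by rw [← L.map_comp, c.i₀_p, L.map_id]
  i₁_p := by rw [← L.map_comp, c.i₁_p, L.map_id]

variable [HasInitial C]

lemma leftHomotopic_iff (Q : QuillenAdjunction M N L R) {X : C} (hX : M.Cofibrant X) {Y : D}
    (hY : N.TrivCofInjective Y) {f g : X ⟶ R.obj Y} :
    M.LeftHomotopic f g ↔
      N.LeftHomotopic ((Q.adj.homEquiv X Y).symm f) ((Q.adj.homEquiv X Y).symm g) := by
  constructor
  · rintro ⟨c, H, h₀, h₁⟩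
    exact ⟨Q.mapCylinder hX c, (Q.adj.homEquiv _ _).symm H,
      (Q.adj.homEquiv_naturality_left_symm c.i₀ H).symm.trans (congrArg _ h₀),
      (Q.adj.homEquiv_naturality_left_symm c.i₁ H).symm.trans (congrArg _ h₁)⟩
  · intro h
    obtain ⟨c, -⟩ := M.exists_cylinder X
    obtain ⟨H, h₀, h₁⟩ := h.exists_homotopy hY (Q.mapCylinder hX c)
    exact ⟨c, Q.adj.homEquiv _ _ H,
      (Q.adj.homEquiv_naturality_left c.i₀ H).symm.trans
        ((congrArg _ h₀).trans (Equiv.apply_symm_apply _ f)),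
      (Q.adj.homEquiv_naturality_left c.i₁ H).symm.trans
        ((congrArg _ h₁).trans (Equiv.apply_symm_apply _ g))⟩

noncomputable def homotopyClassesEquiv (Q : QuillenAdjunction M N L R) {X : C}
    (hX : M.Cofibrant X) {Y : D} (hY : N.TrivCofInjective Y) :
    M.HomotopyClasses X (R.obj Y) ≃ N.HomotopyClasses (L.obj X) Y :=
  Quot.congr (Q.adj.homEquiv X Y).symm fun _ _ => Q.leftHomotopic_iff hX hY

end QuillenAdjunction

namespace MonoidalModelStruct

open ModelStruct

variable {C : Type*} [Category C] [MonoidalCategory C] [HasInitial C]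

noncomputable def isInitialInitialTensor [MonoidalClosed C] [BraidedCategory C] (X : C) :
    IsInitial ((⊥_ C) ⊗ X) :=
  have := (ihom.adjunction X).isLeftAdjoint
  (initialIsInitial.isInitialObj (tensorLeft X) _).ofIso (β_ X (⊥_ C))

lemma whiskerLeft_eq_comp_pushoutProduct [HasPushouts C] (Z : C) {X Y : C} (k : X ⟶ Y) :
    Z ◁ k = pushout.inr _ _ ≫ pushoutProduct (initial.to Z) k :=
  (pushout.inr_desc _ _ _).symm

variable [HasPushouts C] [MonoidalClosed C] [BraidedCategory C] {M : MonoidalModelStruct C}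

lemma isIso_pushout_inr_whiskerLeft (Z : C) {X Y : C} (k : X ⟶ Y) :
    IsIso (pushout.inr ((⊥_ C) ◁ k) (initial.to Z ▷ X)) :=
  have := isIso_of_isInitial (isInitialInitialTensor X) (isInitialInitialTensor Y) ((⊥_ C) ◁ k)
  inferInstance

lemma cof_whiskerLeft {Z : C} (hZ : M.Cofibrant Z) {X Y : C} {k : X ⟶ Y} (hk : M.cof k) :
    M.cof (Z ◁ k) := by
  have := isIso_pushout_inr_whiskerLeft Z k
  rw [whiskerLeft_eq_comp_pushoutProduct]
  exact cof_comp_s5 (cof_of_isIso _) (M.pp_cof _ _ hZ hk)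

lemma weq_whiskerLeft {Z : C} (hZ : M.Cofibrant Z) {X Y : C} {k : X ⟶ Y} (hk : M.cof k)
    (hkw : M.weq k) : M.weq (Z ◁ k) := by
  have := isIso_pushout_inr_whiskerLeft Z k
  rw [whiskerLeft_eq_comp_pushoutProduct]
  exact M.weq_comp _ _ (weq_of_isIso _) (M.pp_weq _ _ hZ hk (.inr hkw))

def tensorLeftQuillenAdjunction {Z : C} (hZ : M.Cofibrant Z) :
    QuillenAdjunction M.toModelStruct M.toModelStruct (tensorLeft Z) (ihom Z) where
  adj := ihom.adjunction Z
  F_cof _ hi := cof_whiskerLeft hZ hi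
  F_trivCof _ hi hiw := weq_whiskerLeft hZ hi hiw

lemma cofibrant_tensorObj {Z X : C} (hZ : M.Cofibrant Z) (hX : M.Cofibrant X) :
    M.Cofibrant (Z ⊗ X) :=
  (tensorLeftQuillenAdjunction hZ).cofibrant_obj hX

end MonoidalModelStruct

lemma homEquiv_symm_uncurry_comp_comparisonMap {W V : Type*} [Category W] [Category V]
    [MonoidalCategory W] [MonoidalCategory V] [MonoidalClosed W] [MonoidalClosed V]
    {F : W ⥤ V} {G : V ⥤ W} [F.OplaxMonoidal] [G.LaxMonoidal] (adj : F ⊣ G)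
    (hδ : ∀ x y : W, adj.homEquiv (x ⊗ y) (F.obj x ⊗ F.obj y) (OplaxMonoidal.δ F x y) =
      (adj.unit.app x ⊗ₘ adj.unit.app y) ≫ LaxMonoidal.μ G (F.obj x) (F.obj y))
    (w : W) (v : V) {c : W} (f : c ⟶ G.obj ((ihom (F.obj w)).obj v)) :
    (adj.homEquiv (w ⊗ c) v).symm (MonoidalClosed.uncurry (f ≫ comparisonMap F G adj w v)) =
      OplaxMonoidal.δ F w c ≫ MonoidalClosed.uncurry ((adj.homEquiv c _).symm f) := by
  apply (adj.homEquiv _ _).symm.symm.injective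
  have hf : adj.unit.app c ≫ G.map ((adj.homEquiv c _).symm f) = f :=
    (adj.homEquiv_unit _ _ _).symm.trans (Equiv.apply_symm_apply _ f)
  rw [Equiv.symm_symm, Equiv.apply_symm_apply, comparisonMap, MonoidalClosed.uncurry_natural_left,
    MonoidalClosed.uncurry_curry, Adjunction.homEquiv_naturality_right, hδ,
    MonoidalClosed.uncurry_eq, G.map_comp]
  conv_lhs => rw [← hf]
  simp [MonoidalCategory.tensorHom_def, whisker_exchange_assoc]

open ModelStruct ModelStruct.HomotopyClasses MonoidalModelStruct

theorem comparisonMap_weq_of_cofibrant_fibrant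
    {W V : Type*} [Category W] [Category V]
    [MonoidalCategory W] [MonoidalCategory V]
    [SymmetricCategory W] [SymmetricCategory V]
    [MonoidalClosed W] [MonoidalClosed V]
    [HasPushouts W] [HasPushouts V] [HasInitial W] [HasInitial V] [HasTerminal V]
    (MW : MonoidalModelStruct W) (MV : MonoidalModelStruct V)
    (F : W ⥤ V) (G : V ⥤ W) [F.OplaxMonoidal] [G.LaxMonoidal]
    (A : WeakMonoidalQuillenAdjunction MW MV F G)
    (w : W) (hw : MW.toModelStruct.Cofibrant w)
    (v : V) (hv : MV.toModelStruct.Fibrant v) :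
    MW.weq (comparisonMap F G A.adj w v) := by
  have := hasBinaryCoproducts_of_hasInitial_and_pushouts W
  have := hasBinaryCoproducts_of_hasInitial_and_pushouts V
  have hFw := A.cofibrant_obj hw
  have hv' := trivCofInjective_of_fibrant hv
  have hHom := (tensorLeftQuillenAdjunction hFw).trivCofInjective_obj hv'
  have hGv := A.trivCofInjective_obj hv'
  refine weq_of_bijective_postcomp _ (A.trivCofInjective_obj hHom)
    ((tensorLeftQuillenAdjunction hw).trivCofInjective_obj hGv) fun c hc => ?_
  have hwc := cofibrant_tensorObj hw hc
  have hFc := A.cofibrant_obj hc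
  -- `e₁ : [c, G [F w, v]] ≃ [F w ⊗ F c, v]` and `e₂ : [c, [w, G v]] ≃ [F (w ⊗ c), v]`
  let e₁ := (A.homotopyClassesEquiv hc hHom).trans
    ((tensorLeftQuillenAdjunction hFw).homotopyClassesEquiv hFc hv')
  let e₂ := ((tensorLeftQuillenAdjunction hw).homotopyClassesEquiv hc hGv).trans
    (A.homotopyClassesEquiv hwc hv')
  have hcomm : e₂ ∘ postcomp (comparisonMap F G A.adj w v) =
      precomp (OplaxMonoidal.δ F w c) hv' ∘ e₁ :=
    funext <| Quot.ind fun f => congrArg (Quot.mk _)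
      (homEquiv_symm_uncurry_comp_comparisonMap A.adj A.compat_comul w v f)
  rw [← e₂.comp_bijective, hcomm]
  exact (bijective_precomp_of_weq (A.comul_weq w c hw hc) (A.cofibrant_obj hwc)
    (cofibrant_tensorObj hFw hFc) hv').comp e₁.bijective
end

section
/- Let V be a closed symmetric monoidal model category and C a model category enriched in V (an enriched ordinary category over V), equipped with: a bifunctor ⊗ : C × V → C; natural maps φ_{v,x,y} : C(x ⊗ v, y) → [v, C(x,y)]_V that are weak equivalences in V whenever v is cofibrant in V, x is cofibrant and y is fibrant in C; and a natural map ρ_x : x ⊗ 𝟙_V → x such that the composite φ_{𝟙_V,x,y} ∘ (ρ_x)* : C(x,y) → [𝟙_V, C(x,y)]_V equals the canonical isomorphism. Assume: (i) x ⊗ v is cofibrant in C whenever x is cofibrant in C and v is cofibrant in V; (ii) C(x,y) is fibrant in V whenever x is cofibrant and y is fibrant; (iii) for every fibrant object M of V and every cofibrant replacement q : Q𝟙_V → 𝟙_V, the map q* : [𝟙_V, M]_V → [Q𝟙_V, M]_V is a weak equivalence in V; (iv) C satisfies the detection property over V. Then the external unit axiom holds: for every cofibrant object x of C and every cofibrant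 replacement q : Q𝟙_V → 𝟙_V, the composite ρ_x ∘ (x ⊗ q) : x ⊗ Q𝟙_V → x is a weak equivalence in C. -/
/-!
STATEMENT 12: Let `V` be a closed symmetric monoidal model category and `C` a model
category enriched in `V` (an enriched ordinary category over `V`), equipped with a
bifunctor `⊗ : C × V → C` (encoded as `T : C ⥤ V ⥤ C`), natural maps
`φ_{v,x,y} : C(x ⊗ v, y) → [v, C(x,y)]_V` that are weak equivalences in `V` whenever `v`
is cofibrant in `V`, `x` is cofibrant and `y` is fibrant in `C`, and a natural map
`ρ_x : x ⊗ 𝟙_V → x` such that `φ_{𝟙_V,x,y} ∘ (ρ_x)*` equals the canonical isomorphism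
`C(x,y) ≅ [𝟙_V, C(x,y)]`. Assume (i) tensors of cofibrant objects are cofibrant;
(ii) hom-objects from cofibrant to fibrant objects are fibrant; (iii) for every fibrant
`M` in `V` and every cofibrant replacement `q : Q𝟙_V → 𝟙_V`, the map
`q* : [𝟙_V, M] → [Q𝟙_V, M]` is a weak equivalence; (iv) `C` satisfies the detection
property over `V`. Then the external unit axiom holds: for every cofibrant `x` in `C` and
every cofibrant replacement `q : Q𝟙_V → 𝟙_V`, the composite
`ρ_x ∘ (x ⊗ q) : x ⊗ Q𝟙_V → x` is a weak equivalence in `C`.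
-/

open CategoryTheory Category Limits MonoidalCategory Functor

/-!
By detection it suffices that restriction along `ρ_x ∘ (x ⊗ q)` is a weak equivalence on
`C(x,z)` for every fibrant `z`. Followed by the weak equivalence `φ_Q`, this restriction is, by
naturality of `φ` in `v` and the compatibility of `ρ` with `φ`, the canonical isomorphism
`C(x,z) ≅ [𝟙, C(x,z)]` followed by `q*`, a weak equivalence by (ii) and (iii); two-out-of-three
concludes.
-/

namespace CategoryTheory.MonoidalClosed

variable {V : Type*} [Category V] [MonoidalCategory V] [MonoidalClosed V]

lemma unitNatIso_hom_app (M : V) : unitNatIso.hom.app M = curry (λ_ M).hom := by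
  simp [unitNatIso, curry_eq]

lemma isIso_curry_leftUnitor_hom (M : V) : IsIso (curry (λ_ M).hom) := by
  rw [← unitNatIso_hom_app]
  infer_instance

end CategoryTheory.MonoidalClosed

lemma ModelStruct.weq_of_isIso_s12 {C : Type*} [Category C] (M : ModelStruct C)
    {X Y : C} (f : X ⟶ Y) [IsIso f] : M.weq f :=
  M.weq_retract f (𝟙 Y) ⟨f, inv f, 𝟙 Y, 𝟙 Y, by simp, by simp, by simp, by simp⟩ (M.weq_id Y)

theorem external_unit_axiom_of_detection_general
    {V C : Type*} [Category V] [Category C]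
    [MonoidalCategory V] [MonoidalClosed V]
    [HasPushouts V] [HasInitial V] [HasTerminal V]
    [EnrichedOrdinaryCategory V C] [HasInitial C] [HasTerminal C]
    (MV : MonoidalModelStruct V) (MC : ModelStruct C)
    (T : C ⥤ V ⥤ C)
    (φ : ∀ (v : V) (x y : C), ((T.obj x).obj v ⟶[V] y) ⟶ (ihom v).obj (x ⟶[V] y))
    -- naturality of `φ` in `v`
    (hφ_nat_v : ∀ {v v' : V} (f : v ⟶ v') (x y : C),
      φ v' x y ≫ (MonoidalClosed.pre f).app (x ⟶[V] y) =
        eHomWhiskerRight V ((T.obj x).map f) y ≫ φ v x y)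
    -- `φ` is a weak equivalence for cofibrant `v`, cofibrant `x`, fibrant `y`
    (hφ_weq : ∀ (v : V) (x y : C), MV.toModelStruct.Cofibrant v → MC.Cofibrant x →
      MC.Fibrant y → MV.weq (φ v x y))
    (ρ : T.flip.obj (𝟙_ V) ⟶ 𝟭 C)
    -- compatibility of `φ` and `ρ` with the canonical isomorphism
    (hρφ : ∀ (x y : C),
      eHomWhiskerRight V (ρ.app x) y ≫ φ (𝟙_ V) x y =
        MonoidalClosed.curry (λ_ (x ⟶[V] y)).hom)
    -- (i) the tensor of cofibrant objects is cofibrant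
    (hTensorCof : ∀ (x : C) (v : V), MC.Cofibrant x → MV.toModelStruct.Cofibrant v →
      MC.Cofibrant ((T.obj x).obj v))
    -- (ii) hom-objects from cofibrant to fibrant objects are fibrant
    (hHomFib : ∀ (x y : C), MC.Cofibrant x → MC.Fibrant y →
      MV.toModelStruct.Fibrant (x ⟶[V] y))
    -- (iii) restriction along a cofibrant replacement of the unit is a weak equivalence
    (hPre : ∀ (M : V), MV.toModelStruct.Fibrant M → ∀ {Q : V} (q : Q ⟶ 𝟙_ V),
      MV.toModelStruct.Cofibrant Q → MV.weq q → MV.weq ((MonoidalClosed.pre q).app M))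
    -- (iv) the detection property over `V`
    (hdet : ∀ {a b : C} (f : a ⟶ b), MC.Cofibrant a → MC.Cofibrant b →
      (∀ (z : C), MC.Fibrant z → MV.weq (eHomWhiskerRight V f z)) → MC.weq f)
    -- the external unit axiom
    (x : C) (hx : MC.Cofibrant x) {Q : V} (q : Q ⟶ 𝟙_ V)
    (hQ : MV.toModelStruct.Cofibrant Q) (hq : MV.weq q) :
    MC.weq ((T.obj x).map q ≫ ρ.app x) := by
  refine hdet _ (hTensorCof x Q hx hQ) hx fun z hz => ?_
  have hsquare : eHomWhiskerRight V ((T.obj x).map q ≫ ρ.app x) z ≫ φ Q x z =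
      MonoidalClosed.curry (λ_ (x ⟶[V] z)).hom ≫ (MonoidalClosed.pre q).app (x ⟶[V] z) := by
    rw [eHomWhiskerRight_comp, assoc, ← hφ_nat_v, ← hρφ, assoc]
  refine MV.weq_of_postcomp _ _ (hφ_weq Q x z hQ hx hz) ?_
  rw [hsquare]
  have := MonoidalClosed.isIso_curry_leftUnitor_hom (x ⟶[V] z)
  exact MV.weq_comp _ _ (MV.weq_of_isIso_s12 _) (hPre _ (hHomFib x z hx hz) q hQ hq)

theorem external_unit_axiom_of_detection
    {V C : Type*} [Category V] [Category C]
    [MonoidalCategory V] [SymmetricCategory V] [MonoidalClosed V]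
    [HasPushouts V] [HasInitial V] [HasTerminal V]
    [EnrichedOrdinaryCategory V C] [HasInitial C] [HasTerminal C]
    (MV : MonoidalModelStruct V) (MC : ModelStruct C)
    (T : C ⥤ V ⥤ C)
    (φ : ∀ (v : V) (x y : C), ((T.obj x).obj v ⟶[V] y) ⟶ (ihom v).obj (x ⟶[V] y))
    -- naturality of `φ` in `v`
    (hφ_nat_v : ∀ {v v' : V} (f : v ⟶ v') (x y : C),
      φ v' x y ≫ (MonoidalClosed.pre f).app (x ⟶[V] y) =
        eHomWhiskerRight V ((T.obj x).map f) y ≫ φ v x y)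
    -- naturality of `φ` in `x`
    (hφ_nat_x : ∀ (v : V) {x x' : C} (g : x ⟶ x') (y : C),
      eHomWhiskerRight V ((T.map g).app v) y ≫ φ v x y =
        φ v x' y ≫ (ihom v).map (eHomWhiskerRight V g y))
    -- naturality of `φ` in `y`
    (hφ_nat_y : ∀ (v : V) (x : C) {y y' : C} (h : y ⟶ y'),
      φ v x y ≫ (ihom v).map (eHomWhiskerLeft V x h) =
        eHomWhiskerLeft V ((T.obj x).obj v) h ≫ φ v x y')
    -- `φ` is a weak equivalence for cofibrant `v`, cofibrant `x`, fibrant `y`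
    (hφ_weq : ∀ (v : V) (x y : C), MV.toModelStruct.Cofibrant v → MC.Cofibrant x →
      MC.Fibrant y → MV.weq (φ v x y))
    (ρ : T.flip.obj (𝟙_ V) ⟶ 𝟭 C)
    -- compatibility of `φ` and `ρ` with the canonical isomorphism
    (hρφ : ∀ (x y : C),
      eHomWhiskerRight V (ρ.app x) y ≫ φ (𝟙_ V) x y =
        MonoidalClosed.curry (λ_ (x ⟶[V] y)).hom)
    -- (i) the tensor of cofibrant objects is cofibrant
    (hTensorCof : ∀ (x : C) (v : V), MC.Cofibrant x → MV.toModelStruct.Cofibrant v →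
      MC.Cofibrant ((T.obj x).obj v))
    -- (ii) hom-objects from cofibrant to fibrant objects are fibrant
    (hHomFib : ∀ (x y : C), MC.Cofibrant x → MC.Fibrant y →
      MV.toModelStruct.Fibrant (x ⟶[V] y))
    -- (iii) restriction along a cofibrant replacement of the unit is a weak equivalence
    (hPre : ∀ (M : V), MV.toModelStruct.Fibrant M → ∀ {Q : V} (q : Q ⟶ 𝟙_ V),
      MV.toModelStruct.Cofibrant Q → MV.weq q → MV.weq ((MonoidalClosed.pre q).app M))
    -- (iv) the detection property over `V`
    (hdet : ∀ {a b : C} (f : a ⟶ b), MC.Cofibrant a → MC.Cofibrant b →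
      (∀ (z : C), MC.Fibrant z → MV.weq (eHomWhiskerRight V f z)) → MC.weq f)
    -- the external unit axiom
    (x : C) (hx : MC.Cofibrant x) {Q : V} (q : Q ⟶ 𝟙_ V)
    (hQ : MV.toModelStruct.Cofibrant Q) (hq : MV.weq q) :
    MC.weq ((T.obj x).map q ≫ ρ.app x) :=
  external_unit_axiom_of_detection_general MV MC T φ hφ_nat_v hφ_weq ρ hρφ hTensorCof hHomFib hPre
    hdet x hx q hQ hq
end
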